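/- arXiv:1905.05495 — 4 statements merged into one kernel-verified Lean document; each statement's English description precedes it below -/
import Mathlib

section
/- Let N ≥ 1 be an integer and a > 0, ζ > 0 real numbers with N > aζ. For a real parameter a > 0 and δ ∈ (0,1), define φ_δ : [0,1] → ℝ by φ_δ(r) = r^{-a} for δ ≤ r ≤ 1 and φ_δ(r) = δ^{-a}(1 + a/2) − (a/2) δ^{-(a+2)} r^2 for 0 ≤ r < δ. Then for every δ ∈ (0,1), |N·∫_0^1 r^{N−1} φ_δ(r)^ζ dr − N/(N − aζ)| ≤ (N/(N − aζ) + (1 + a/2)^ζ)·δ^{N − aζ}. In particular, N·∫_0^1 r^{N−1} φ_δ(r)^ζ dr = N/(N − aζ) + O(δ^{N − aζ}) as δ ↓ 0. -/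
/-- The spiky initial-data profile `φ_δ`. -/
noncomputable def phiSpike (a δ : ℝ) : ℝ → ℝ := fun r =>
  if r < δ then δ ^ (-a) * (1 + a / 2) - a / 2 * δ ^ (-(a + 2)) * r ^ 2
  else r ^ (-a)

theorem stmt_9 (N : ℕ) (hN : 1 ≤ N) (a ζ : ℝ) (ha : 0 < a) (hζ : 0 < ζ)
    (hNaζ : a * ζ < (N:ℝ)) :
    ∀ δ ∈ Set.Ioo (0:ℝ) 1,
      |(N:ℝ) * (∫ r in (0:ℝ)..1, r ^ (N - 1) * phiSpike a δ r ^ ζ) -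
          (N:ℝ) / ((N:ℝ) - a * ζ)| ≤
        ((N:ℝ) / ((N:ℝ) - a * ζ) + (1 + a / 2) ^ ζ) * δ ^ ((N:ℝ) - a * ζ) := by
  rintro δ ⟨hδ0, hδ1⟩
  have hNpos : (0:ℝ) < N := by exact_mod_cast hN
  set c : ℝ := (N:ℝ) - a * ζ with hc_def
  have hc : 0 < c := by simp only [hc_def]; linarith
  have hδa : (0:ℝ) < δ ^ (-a) := Real.rpow_pos_of_pos hδ0 _
  set M : ℝ := δ ^ (-a) * (1 + a / 2) with hM_def
  have hM0 : 0 < M := by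
    have : (0:ℝ) < 1 + a / 2 := by linarith
    positivity
  -- key rpow identity: δ ^ (-(a+2)) * δ ^ 2 = δ ^ (-a)
  have hkey : δ ^ (-(a + 2)) * δ ^ (2:ℕ) = δ ^ (-a) := by
    rw [← Real.rpow_natCast δ 2, ← Real.rpow_add hδ0]
    norm_num
  -- pointwise bounds for phi on [0, δ]
  have hphi_pos : ∀ r ∈ Set.Icc (0:ℝ) δ, (0:ℝ) < phiSpike a δ r := by
    rintro r ⟨hr0, hrδ⟩
    unfold phiSpike
    split_ifs with h
    · have hr2 : r ^ 2 ≤ δ ^ 2 := by nlinarith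
      have h1 : a / 2 * δ ^ (-(a + 2)) * r ^ 2 ≤ a / 2 * δ ^ (-(a + 2)) * δ ^ 2 :=
        mul_le_mul_of_nonneg_left hr2 (by positivity)
      have h2 : a / 2 * δ ^ (-(a + 2)) * δ ^ 2 = a / 2 * δ ^ (-a) := by
        rw [mul_assoc, hkey]
      nlinarith
    · exact Real.rpow_pos_of_pos (lt_of_lt_of_le hδ0 (le_of_not_gt h)) _
  have hphi_le : ∀ r ∈ Set.Icc (0:ℝ) δ, phiSpike a δ r ≤ M := by
    rintro r ⟨hr0, hrδ⟩
    unfold phiSpike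
    split_ifs with h
    · have h1 : 0 ≤ a / 2 * δ ^ (-(a + 2)) * r ^ 2 := by positivity
      simp only [hM_def]
      linarith
    · have hrδ' : r = δ := le_antisymm hrδ (le_of_not_gt h)
      subst hrδ'
      nlinarith
  -- the integrand
  set f : ℝ → ℝ := fun r => r ^ (N - 1) * phiSpike a δ r ^ ζ with hf_def
  -- continuity / integrability on [0, δ]
  have hEqq : Set.EqOn f
      (fun r => r ^ (N - 1) * (δ ^ (-a) * (1 + a / 2) - a / 2 * δ ^ (-(a + 2)) * r ^ 2) ^ ζ)
      (Set.Icc (0:ℝ) δ) := by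
    rintro r ⟨hr0, hrδ⟩
    simp only [hf_def, phiSpike]
    split_ifs with h
    · rfl
    · have hrδ' : r = δ := le_antisymm hrδ (le_of_not_gt h)
      subst hrδ'
      rw [mul_assoc, hkey]
      ring
  have hcontq : ContinuousOn
      (fun r : ℝ => r ^ (N - 1) * (δ ^ (-a) * (1 + a / 2) - a / 2 * δ ^ (-(a + 2)) * r ^ 2) ^ ζ)
      (Set.Icc (0:ℝ) δ) := by
    apply ContinuousOn.mul (by fun_prop)
    apply ContinuousOn.rpow_const (by fun_prop)
    intro x _
    exact Or.inr hζ.le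
  have hintf1 : IntervalIntegrable f MeasureTheory.volume 0 δ := by
    apply ContinuousOn.intervalIntegrable
    rw [Set.uIcc_of_le hδ0.le]
    exact hcontq.congr hEqq
  -- on [δ, 1] : f r = r ^ (c - 1)
  have hEqr : Set.EqOn f (fun r => r ^ (c - 1)) (Set.uIcc δ 1) := by
    rw [Set.uIcc_of_le hδ1.le]
    rintro r ⟨hrδ, hr1⟩
    have hr0 : (0:ℝ) < r := lt_of_lt_of_le hδ0 hrδ
    simp only [hf_def]
    unfold phiSpike
    rw [if_neg (not_lt.mpr hrδ)]
    rw [← Real.rpow_natCast r (N - 1), ← Real.rpow_mul hr0.le, ← Real.rpow_add hr0]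
    congr 1
    rw [Nat.cast_sub hN]
    simp only [hc_def]
    push_cast
    ring
  have hintf2 : IntervalIntegrable f MeasureTheory.volume δ 1 := by
    apply ContinuousOn.intervalIntegrable
    apply ContinuousOn.congr _ hEqr
    apply ContinuousOn.rpow_const (by fun_prop)
    rintro x hx
    rw [Set.uIcc_of_le hδ1.le] at hx
    exact Or.inl (ne_of_gt (lt_of_lt_of_le hδ0 hx.1))
  -- value of second integral
  have hB : ∫ r in δ..1, f r = (1 - δ ^ c) / c := by
    rw [intervalIntegral.integral_congr hEqr]
    rw [integral_rpow (Or.inl (by linarith))]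
    have h1 : c - 1 + 1 = c := by ring
    rw [h1, Real.one_rpow]
  -- split
  have hsplit : ∫ r in (0:ℝ)..1, f r = (∫ r in (0:ℝ)..δ, f r) + ∫ r in δ..1, f r :=
    (intervalIntegral.integral_add_adjacent_intervals hintf1 hintf2).symm
  -- bound the first integral
  set A : ℝ := ∫ r in (0:ℝ)..δ, f r with hA_def
  have hA0 : 0 ≤ A := by
    apply intervalIntegral.integral_nonneg hδ0.le
    intro r hr
    have := hphi_pos r hr
    have hr0 : 0 ≤ r := hr.1
    simp only [hf_def]
    positivity
  have hN1 : N - 1 + 1 = N := Nat.succ_pred_eq_of_pos hN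
  have hIg : ∫ r in (0:ℝ)..δ, M ^ ζ * r ^ (N - 1) = M ^ ζ * (δ ^ N / N) := by
    rw [intervalIntegral.integral_const_mul, integral_pow, hN1]
    rw [zero_pow (by omega)]
    push_cast [Nat.cast_sub hN]
    ring
  have hAle : A ≤ M ^ ζ * (δ ^ N / N) := by
    rw [← hIg, hA_def]
    apply intervalIntegral.integral_mono_on hδ0.le hintf1
    · apply (Continuous.continuousOn (by fun_prop)).intervalIntegrable
    · intro r hr
      have hr0 : (0:ℝ) ≤ r := hr.1
      simp only [hf_def]
      have h1 : phiSpike a δ r ^ ζ ≤ M ^ ζ :=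
        Real.rpow_le_rpow (hphi_pos r hr).le (hphi_le r hr) hζ.le
      have h2 : (0:ℝ) ≤ r ^ (N - 1) := by positivity
      calc r ^ (N - 1) * phiSpike a δ r ^ ζ ≤ r ^ (N - 1) * M ^ ζ := by nlinarith
        _ = M ^ ζ * r ^ (N - 1) := by ring
  -- M ^ ζ * δ ^ N = (1 + a/2) ^ ζ * δ ^ c
  have hMδ : M ^ ζ * δ ^ N = (1 + a / 2) ^ ζ * δ ^ c := by
    have ha2 : (0:ℝ) ≤ 1 + a / 2 := by linarith
    rw [hM_def, Real.mul_rpow hδa.le ha2, mul_right_comm, ← Real.rpow_natCast δ N,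
      ← Real.rpow_mul hδ0.le, ← Real.rpow_add hδ0, mul_comm]
    congr 1
    simp only [hc_def]
    ring
  have hNA : (N:ℝ) * A ≤ (1 + a / 2) ^ ζ * δ ^ c := by
    have : (N:ℝ) * (M ^ ζ * (δ ^ N / N)) = M ^ ζ * δ ^ N := by
      field_simp
    nlinarith
  -- put everything together
  have hδc : 0 ≤ δ ^ c := (Real.rpow_pos_of_pos hδ0 c).le
  have hrw : (N:ℝ) * (∫ r in (0:ℝ)..1, f r) - (N:ℝ) / c
      = (N:ℝ) * A - ((N:ℝ) / c) * δ ^ c := by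
    rw [hsplit, hB]
    field_simp
    ring
  rw [show (∫ r in (0:ℝ)..1, r ^ (N-1) * phiSpike a δ r ^ ζ) = ∫ r in (0:ℝ)..1, f r from rfl]
  clear_value f A M c
  rw [hrw]
  have hNc : 0 ≤ (N:ℝ) / c := by positivity
  have hNAnn : 0 ≤ (N:ℝ) * A := mul_nonneg hNpos.le hA0
  have h1 : 0 ≤ (1 + a / 2) ^ ζ * δ ^ c := by
    have : (0:ℝ) < 1 + a / 2 := by linarith
    positivity
  have h2 : 0 ≤ (N:ℝ) / c * δ ^ c := mul_nonneg hNc hδc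
  have hexp : ((N:ℝ) / c + (1 + a / 2) ^ ζ) * δ ^ c
      = (N:ℝ) / c * δ ^ c + (1 + a / 2) ^ ζ * δ ^ c := by ring
  rw [abs_le, hexp]
  constructor
  · linarith
  · linarith
end

section
/- Let p > 1 be real, set a = 2/(p−1), let N ≥ 1 be an integer and δ ∈ (0,1). For a real parameter a > 0 and δ ∈ (0,1), define φ_δ : [0,1] → ℝ by φ_δ(r) = r^{-a} for δ ≤ r ≤ 1 and φ_δ(r) = δ^{-a}(1 + a/2) − (a/2) δ^{-(a+2)} r^2 for 0 ≤ r < δ. Then for every r ∈ (0,1) with r ≠ δ, φ_δ is twice differentiable at r and (d²/dr²)φ_δ(r) + ((N−1)/r)·(d/dr)φ_δ(r) ≥ −N·a·φ_δ(r)^p. -/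
theorem stmt_10 (p a : ℝ) (hp : 1 < p) (ha : a = 2 / (p - 1))
    (N : ℕ) (hN : 1 ≤ N) (δ : ℝ) (hδ : δ ∈ Set.Ioo (0:ℝ) 1) :
    ∀ r ∈ Set.Ioo (0:ℝ) 1, r ≠ δ →
      DifferentiableAt ℝ (phiSpike a δ) r ∧
      DifferentiableAt ℝ (deriv (phiSpike a δ)) r ∧
      -((N:ℝ) * a) * phiSpike a δ r ^ p ≤
        deriv (deriv (phiSpike a δ)) r + ((N:ℝ) - 1) / r * deriv (phiSpike a δ) r := by
  obtain ⟨hδ0, hδ1⟩ := hδ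
  intro r hr hrδ
  obtain ⟨hr0, hr1⟩ := hr
  have hp1 : (0:ℝ) < p - 1 := by linarith
  have ha0 : 0 < a := by rw [ha]; positivity
  have hap : a * p = a + 2 := by
    rw [ha]; field_simp; ring
  have hN1 : (1:ℝ) ≤ N := by exact_mod_cast hN
  rcases lt_or_gt_of_ne hrδ with hlt | hgt
  · -- r < δ : quadratic branch
    set c := a / 2 * δ ^ (-(a + 2)) with hc
    have hev : phiSpike a δ =ᶠ[nhds r]
        fun x => δ ^ (-a) * (1 + a / 2) - c * x ^ 2 := by
      filter_upwards [Iio_mem_nhds hlt] with x hx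
      simp only [phiSpike]
      rw [if_pos (Set.mem_Iio.mp hx)]
    have hg : ∀ x : ℝ, HasDerivAt (fun y => δ ^ (-a) * (1 + a / 2) - c * y ^ 2)
        (-(2 * c) * x) x := by
      intro x
      have h := ((hasDerivAt_pow 2 x).const_mul c).const_sub (δ ^ (-a) * (1 + a / 2))
      refine h.congr_deriv ?_
      push_cast
      ring
    have hD1 : DifferentiableAt ℝ (phiSpike a δ) r :=
      hev.differentiableAt_iff.mpr (hg r).differentiableAt
    have hd1 : deriv (fun y => δ ^ (-a) * (1 + a / 2) - c * y ^ 2)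
        = fun x => -(2 * c) * x := by
      funext x; exact (hg x).deriv
    have hev2 : deriv (phiSpike a δ) =ᶠ[nhds r] fun x => -(2 * c) * x := by
      refine hev.deriv.trans ?_
      rw [hd1]
    have hlin : ∀ x : ℝ, HasDerivAt (fun y : ℝ => -(2 * c) * y) (-(2 * c)) x := by
      intro x
      simpa using (hasDerivAt_id x).const_mul (-(2 * c))
    have hD2 : DifferentiableAt ℝ (deriv (phiSpike a δ)) r :=
      hev2.differentiableAt_iff.mpr (hlin r).differentiableAt
    have hderiv1 : deriv (phiSpike a δ) r = -(2 * c) * r := by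
      rw [hev.deriv_eq, hd1]
    have hderiv2 : deriv (deriv (phiSpike a δ)) r = -(2 * c) := by
      rw [hev2.deriv_eq]
      exact (hlin r).deriv
    have hval : phiSpike a δ r = δ ^ (-a) * (1 + a / 2) - c * r ^ 2 := by
      simp only [phiSpike]
      rw [if_pos hlt, hc]
    have hδa : (0:ℝ) < δ ^ (-a) := Real.rpow_pos_of_pos hδ0 _
    have hδc : (0:ℝ) < δ ^ (-(a + 2)) := Real.rpow_pos_of_pos hδ0 _
    have hδmul : δ ^ (-(a + 2)) * δ ^ 2 = δ ^ (-a) := by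
      have h2 : (δ:ℝ) ^ 2 = δ ^ (2:ℝ) := by
        rw [← Real.rpow_natCast δ 2]; norm_num
      rw [h2, ← Real.rpow_add hδ0]
      norm_num
    have hφge : δ ^ (-a) ≤ phiSpike a δ r := by
      rw [hval, hc]
      have hrsq : r ^ 2 ≤ δ ^ 2 := by nlinarith
      nlinarith [mul_le_mul_of_nonneg_left hrsq (le_of_lt (half_pos ha0)),
        mul_pos (half_pos ha0) hδc]
    have hpow : (δ ^ (-a) : ℝ) ^ p = δ ^ (-(a + 2)) := by
      rw [← Real.rpow_mul hδ0.le]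
      congr 1
      rw [← hap]; ring
    have hkey : δ ^ (-(a + 2)) ≤ phiSpike a δ r ^ p := by
      rw [← hpow]
      exact Real.rpow_le_rpow hδa.le hφge (by linarith)
    refine ⟨hD1, hD2, ?_⟩
    rw [hderiv1, hderiv2]
    have hrne : r ≠ 0 := ne_of_gt hr0
    have hrw : ((N:ℝ) - 1) / r * (-(2 * c) * r) = ((N:ℝ) - 1) * (-(2 * c)) := by
      field_simp
    rw [hrw]
    have hrhs : -(2 * c) + ((N:ℝ) - 1) * (-(2 * c)) = -((N:ℝ) * a) * δ ^ (-(a + 2)) := by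
      rw [hc]; ring
    rw [hrhs]
    exact mul_le_mul_of_nonpos_left hkey
      (neg_nonpos.mpr (by positivity))
  · -- r > δ : power branch
    have hgd : ∀ x : ℝ, x ≠ 0 →
        HasDerivAt (fun y : ℝ => y ^ (-a)) (-a * x ^ (-a - 1)) x :=
      fun x hx => Real.hasDerivAt_rpow_const (Or.inl hx)
    have hev : phiSpike a δ =ᶠ[nhds r] fun x => x ^ (-a) := by
      filter_upwards [Ioi_mem_nhds hgt] with x hx
      simp only [phiSpike, Set.mem_Ioi] at *
      rw [if_neg (not_lt.mpr hx.le)]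
    have hD1 : DifferentiableAt ℝ (phiSpike a δ) r :=
      hev.differentiableAt_iff.mpr (hgd r (ne_of_gt hr0)).differentiableAt
    have hev2 : deriv (phiSpike a δ) =ᶠ[nhds r] fun x => -a * x ^ (-a - 1) := by
      filter_upwards [hev.deriv, Ioi_mem_nhds hgt] with x h1 h2
      rw [h1, (hgd x (ne_of_gt (hδ0.trans h2))).deriv]
    have h2d : HasDerivAt (fun x : ℝ => -a * x ^ (-a - 1))
        (-a * ((-a - 1) * r ^ (-a - 1 - 1))) r :=
      (Real.hasDerivAt_rpow_const (Or.inl (ne_of_gt hr0))).const_mul (-a)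
    have hD2 : DifferentiableAt ℝ (deriv (phiSpike a δ)) r :=
      hev2.differentiableAt_iff.mpr h2d.differentiableAt
    have hderiv1 : deriv (phiSpike a δ) r = -a * r ^ (-a - 1) := by
      rw [hev.deriv_eq, (hgd r (ne_of_gt hr0)).deriv]
    have hderiv2 : deriv (deriv (phiSpike a δ)) r
        = -a * ((-a - 1) * r ^ (-a - 1 - 1)) := by
      rw [hev2.deriv_eq]
      exact h2d.deriv
    have hval : phiSpike a δ r = r ^ (-a) := by
      simp only [phiSpike]
      rw [if_neg (not_lt.mpr hgt.le)]
    set s := r ^ (-a - 2) with hs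
    have hspos : 0 < s := Real.rpow_pos_of_pos hr0 _
    have e1 : r ^ (-a - 1 - 1) = s := by rw [hs]; congr 1; ring
    have e2 : r ^ (-a - 1) = s * r := by
      rw [hs, show -a - 1 = (-a - 2) + 1 by ring, Real.rpow_add hr0, Real.rpow_one]
    have e3 : (r ^ (-a) : ℝ) ^ p = s := by
      rw [← Real.rpow_mul hr0.le, hs]
      congr 1
      rw [show -a * p = -(a * p) by ring, hap]; ring
    refine ⟨hD1, hD2, ?_⟩
    rw [hderiv1, hderiv2, hval, e3, e1, e2]
    have hrne : r ≠ 0 := ne_of_gt hr0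
    have hrw : ((N:ℝ) - 1) / r * (-a * (s * r)) = ((N:ℝ) - 1) * (-a * s) := by
      field_simp
    rw [hrw]
    nlinarith [mul_pos ha0 hspos, mul_pos (mul_pos ha0 ha0) hspos]
end

section
/- Let N ≥ 1 be an integer and p > 1, a > 0, μ > 0 real numbers with N > a·p. For a real parameter a > 0 and δ ∈ (0,1), define φ_δ : [0,1] → ℝ by φ_δ(r) = r^{-a} for δ ≤ r ≤ 1 and φ_δ(r) = δ^{-a}(1 + a/2) − (a/2) δ^{-(a+2)} r^2 for 0 ≤ r < δ. Then for every δ ∈ (0,1), (N/(N−a) + (1 + a/2))^{−μ} ≤ (N∫_0^1 r^{N−1} φ_δ(r)^p dr) / (N∫_0^1 r^{N−1} φ_δ(r) dr)^μ ≤ N/(N−ap) + (1 + a/2)^p. In particular the quantities α₁ = sup_{0<δ<1} (⨍_{B_1} φ_δ^p dx)/φ̄_δ^μ and α₂ = inf_{0<δ<1} (⨍_{B_1} φ_δ^p dx)/φ̄_δ^μ are finite and positive. -/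
/-- The ratio `(⨍_{B_1} φ_δ^p dx) / (⨍_{B_1} φ_δ dx)^μ` for the unit ball of `ℝ^N`. -/
noncomputable def phiRatio (N : ℕ) (a p μ δ : ℝ) : ℝ :=
  ((N:ℝ) * ∫ r in (0:ℝ)..1, r ^ (N - 1) * phiSpike a δ r ^ p) /
    ((N:ℝ) * ∫ r in (0:ℝ)..1, r ^ (N - 1) * phiSpike a δ r) ^ μ

open MeasureTheory intervalIntegral Set


lemma phi_key {a δ : ℝ} (hδ0 : 0 < δ) : δ ^ (-(a + 2)) * δ ^ 2 = δ ^ (-a) := by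
  rw [← Real.rpow_natCast δ 2, ← Real.rpow_add hδ0]
  norm_num

lemma phi_lb {a δ : ℝ} (ha : 0 < a) (hδ0 : 0 < δ) (hδ1 : δ < 1) :
    ∀ r ∈ Icc (0:ℝ) 1, 1 ≤ phiSpike a δ r := by
  intro r hr
  unfold phiSpike
  split_ifs with h
  · have hX : δ ^ (-(a + 2)) * r ^ 2 ≤ δ ^ (-a) := by
      calc δ ^ (-(a + 2)) * r ^ 2 ≤ δ ^ (-(a + 2)) * δ ^ 2 := by
            have h2 : r ^ 2 ≤ δ ^ 2 := pow_le_pow_left₀ hr.1 h.le 2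
            have h3 := Real.rpow_pos_of_pos hδ0 (-(a+2))
            nlinarith
        _ = δ ^ (-a) := phi_key hδ0
    have h1 : 1 ≤ δ ^ (-a) :=
      Real.one_le_rpow_of_pos_of_le_one_of_nonpos hδ0 hδ1.le (by linarith)
    nlinarith
  · exact Real.one_le_rpow_of_pos_of_le_one_of_nonpos
      (lt_of_lt_of_le hδ0 (not_lt.1 h)) hr.2 (by linarith)

lemma phi_ub {a δ : ℝ} (ha : 0 < a) (hδ0 : 0 < δ) :
    ∀ r ∈ Icc (0:ℝ) 1, phiSpike a δ r ≤ δ ^ (-a) * (1 + a / 2) := by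
  intro r hr
  unfold phiSpike
  split_ifs with h
  · have : 0 ≤ a / 2 * δ ^ (-(a + 2)) * r ^ 2 := by positivity
    linarith
  · have h1 : r ^ (-a) ≤ δ ^ (-a) :=
      Real.rpow_le_rpow_of_nonpos hδ0 (not_lt.1 h) (by linarith)
    nlinarith [Real.rpow_pos_of_pos hδ0 (-a)]

lemma key {a δ : ℝ} (ha : 0 < a) (hδ0 : 0 < δ) (hδ1 : δ < 1)
    (N : ℕ) (hN : 1 ≤ N) (q : ℝ) (hq : 1 ≤ q) (hNaq : a * q < N) :
    1 ≤ (N:ℝ) * ∫ r in (0:ℝ)..1, r ^ (N - 1) * phiSpike a δ r ^ q ∧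
    (N:ℝ) * (∫ r in (0:ℝ)..1, r ^ (N - 1) * phiSpike a δ r ^ q) ≤
      (N:ℝ) / ((N:ℝ) - a * q) + (1 + a / 2) ^ q := by
  have hq0 : (0:ℝ) ≤ q := by linarith
  have hN0 : (0:ℝ) < N := by exact_mod_cast hN
  have hNne : N ≠ 0 := by omega
  have hNaq' : (0:ℝ) < (N:ℝ) - a * q := by linarith
  set f : ℝ → ℝ := fun r => r ^ (N - 1) * phiSpike a δ r ^ q with hf
  set K : ℝ := δ ^ (-a) * (1 + a / 2) with hK
  have hK0 : 0 < K := by positivity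
  have hcast : ((N - 1 : ℕ) : ℝ) + 1 = (N:ℝ) := by
    have := Nat.cast_sub hN (R := ℝ); simp [this]
  have hsucc : (N - 1) + 1 = N := Nat.succ_pred_eq_of_pos hN
  -- equality on [0, δ]
  have eq0 : EqOn (fun r : ℝ => r ^ (N - 1) *
      (δ ^ (-a) * (1 + a / 2) - a / 2 * δ ^ (-(a + 2)) * r ^ 2) ^ q) f (Icc 0 δ) := by
    intro r hr
    simp only [hf, phiSpike]
    split_ifs with h
    · rfl
    · have hrδ : r = δ := le_antisymm hr.2 (not_lt.1 h)
      rw [hrδ]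
      have h2 : δ ^ (-a) * (1 + a / 2) - a / 2 * δ ^ (-(a + 2)) * δ ^ 2 = δ ^ (-a) := by
        linear_combination (-(a / 2)) * phi_key (a := a) hδ0
      rw [h2]
  -- equality on [δ, 1]
  have eq1 : EqOn f (fun r : ℝ => r ^ ((N:ℝ) - 1 - a * q)) (Icc δ 1) := by
    intro r hr
    have hr0 : 0 < r := lt_of_lt_of_le hδ0 hr.1
    simp only [hf, phiSpike, if_neg (not_lt.2 hr.1)]
    rw [← Real.rpow_natCast r (N - 1), ← Real.rpow_mul hr0.le, ← Real.rpow_add hr0]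
    congr 1
    have h3 : ((N - 1 : ℕ) : ℝ) = (N:ℝ) - 1 := by linarith [hcast]
    rw [h3]; ring
  -- integrability
  have cont0 : ContinuousOn (fun r : ℝ => r ^ (N - 1) *
      (δ ^ (-a) * (1 + a / 2) - a / 2 * δ ^ (-(a + 2)) * r ^ 2) ^ q) (Icc 0 δ) := by
    apply ContinuousOn.mul (by fun_prop)
    exact (by fun_prop : Continuous fun r : ℝ =>
      δ ^ (-a) * (1 + a / 2) - a / 2 * δ ^ (-(a + 2)) * r ^ 2).continuousOn.rpow_const
      (fun x _ => Or.inr hq0)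
  have int0 : IntervalIntegrable f volume 0 δ := by
    rw [intervalIntegrable_iff_integrableOn_Icc_of_le hδ0.le]
    exact (cont0.integrableOn_Icc).congr_fun eq0 measurableSet_Icc
  have cont1 : ContinuousOn (fun r : ℝ => r ^ ((N:ℝ) - 1 - a * q)) (Icc δ 1) :=
    continuousOn_id.rpow_const (fun x hx => Or.inl (ne_of_gt (lt_of_lt_of_le hδ0 hx.1)))
  have int1 : IntervalIntegrable f volume δ 1 := by
    rw [intervalIntegrable_iff_integrableOn_Icc_of_le hδ1.le]
    exact (cont1.integrableOn_Icc).congr_fun (fun r hr => (eq1 hr).symm) measurableSet_Icc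
  have intf : IntervalIntegrable f volume 0 1 := int0.trans int1
  constructor
  · -- lower bound
    have mono : ∫ r in (0:ℝ)..1, r ^ (N - 1) ≤ ∫ r in (0:ℝ)..1, f r := by
      apply integral_mono_on zero_le_one ((continuous_pow _).intervalIntegrable _ _) intf
      intro r hr
      have h1 : 1 ≤ phiSpike a δ r ^ q := Real.one_le_rpow (phi_lb ha hδ0 hδ1 r hr) hq0
      have h0 : 0 ≤ r ^ (N - 1) := pow_nonneg hr.1 _
      simpa [hf] using le_mul_of_one_le_right h0 h1
    have hval : ∫ r in (0:ℝ)..1, r ^ (N - 1) = 1 / (N:ℝ) := by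
      rw [integral_pow, hsucc, hcast, one_pow, zero_pow hNne]; norm_num
    rw [hval] at mono
    calc (1:ℝ) = (N:ℝ) * (1 / N) := by field_simp
      _ ≤ (N:ℝ) * ∫ r in (0:ℝ)..1, f r := mul_le_mul_of_nonneg_left mono hN0.le
  · -- upper bound
    have split : ∫ r in (0:ℝ)..1, f r = (∫ r in (0:ℝ)..δ, f r) + ∫ r in δ..1, f r :=
      (integral_add_adjacent_intervals int0 int1).symm
    have hub0 : ∫ r in (0:ℝ)..δ, f r ≤ K ^ q * (δ ^ N / N) := by
      have hle : ∫ r in (0:ℝ)..δ, f r ≤ ∫ r in (0:ℝ)..δ, K ^ q * r ^ (N - 1) := by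
        apply integral_mono_on hδ0.le int0
          ((continuous_const.mul (continuous_pow _)).intervalIntegrable _ _)
        intro r hr
        have hr1 : r ∈ Icc (0:ℝ) 1 := ⟨hr.1, le_trans hr.2 hδ1.le⟩
        have hphi0 : 0 ≤ phiSpike a δ r := le_trans zero_le_one (phi_lb ha hδ0 hδ1 r hr1)
        have h1 : phiSpike a δ r ^ q ≤ K ^ q :=
          Real.rpow_le_rpow hphi0 (phi_ub ha hδ0 r hr1) hq0
        have h0 : 0 ≤ r ^ (N - 1) := pow_nonneg hr.1 _
        calc r ^ (N - 1) * phiSpike a δ r ^ q ≤ r ^ (N - 1) * K ^ q :=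
              mul_le_mul_of_nonneg_left h1 h0
          _ = K ^ q * r ^ (N - 1) := by ring
      rw [intervalIntegral.integral_const_mul, integral_pow, hsucc, hcast,
        zero_pow hNne] at hle
      simpa using hle
    have hub1 : ∫ r in δ..1, f r ≤ 1 / ((N:ℝ) - a * q) := by
      have hcon : ∫ r in δ..1, f r = ∫ r in δ..1, r ^ ((N:ℝ) - 1 - a * q) :=
        integral_congr (by rwa [uIcc_of_le hδ1.le])
      rw [hcon, integral_rpow (Or.inl (by linarith))]
      have h1 : (N:ℝ) - 1 - a * q + 1 = (N:ℝ) - a * q := by ring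
      rw [h1, Real.one_rpow]
      have h2 : 0 ≤ δ ^ ((N:ℝ) - a * q) := (Real.rpow_pos_of_pos hδ0 _).le
      rw [div_le_div_iff₀ hNaq' hNaq']
      nlinarith
    have hKq : K ^ q * δ ^ N ≤ (1 + a / 2) ^ q := by
      have hmul : K ^ q = δ ^ (-(a * q)) * (1 + a / 2) ^ q := by
        rw [hK, Real.mul_rpow (Real.rpow_pos_of_pos hδ0 _).le (by positivity),
          ← Real.rpow_mul hδ0.le]
        ring_nf
      have hδN : δ ^ (-(a * q)) * δ ^ N = δ ^ ((N:ℝ) - a * q) := by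
        rw [← Real.rpow_natCast δ N, ← Real.rpow_add hδ0]
        ring_nf
      have hle1 : δ ^ ((N:ℝ) - a * q) ≤ 1 :=
        Real.rpow_le_one hδ0.le hδ1.le (by linarith)
      calc K ^ q * δ ^ N = δ ^ ((N:ℝ) - a * q) * (1 + a / 2) ^ q := by
            rw [hmul, ← hδN]; ring
        _ ≤ 1 * (1 + a / 2) ^ q :=
            mul_le_mul_of_nonneg_right hle1 (by positivity)
        _ = (1 + a / 2) ^ q := one_mul _
    calc (N:ℝ) * ∫ r in (0:ℝ)..1, f r
        ≤ (N:ℝ) * (K ^ q * (δ ^ N / N) + 1 / ((N:ℝ) - a * q)) := by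
          rw [split]; exact mul_le_mul_of_nonneg_left (add_le_add hub0 hub1) hN0.le
      _ = K ^ q * δ ^ N + (N:ℝ) / ((N:ℝ) - a * q) := by field_simp
      _ ≤ (1 + a / 2) ^ q + (N:ℝ) / ((N:ℝ) - a * q) := by linarith
      _ = (N:ℝ) / ((N:ℝ) - a * q) + (1 + a / 2) ^ q := by ring

theorem stmt_12 (N : ℕ) (hN : 1 ≤ N) (p a μ : ℝ) (hp : 1 < p) (ha : 0 < a)
    (hμ : 0 < μ) (hNap : a * p < (N:ℝ)) :
    (∀ δ ∈ Set.Ioo (0:ℝ) 1,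
      ((N:ℝ) / ((N:ℝ) - a) + (1 + a / 2)) ^ (-μ) ≤ phiRatio N a p μ δ ∧
      phiRatio N a p μ δ ≤ (N:ℝ) / ((N:ℝ) - a * p) + (1 + a / 2) ^ p) ∧
    BddAbove (phiRatio N a p μ '' Set.Ioo 0 1) ∧
    0 < sSup (phiRatio N a p μ '' Set.Ioo 0 1) ∧
    0 < sInf (phiRatio N a p μ '' Set.Ioo 0 1) := by
  have haN : a < (N:ℝ) := by nlinarith
  set U1 : ℝ := (N:ℝ) / ((N:ℝ) - a) + (1 + a / 2) with hU1
  set Up : ℝ := (N:ℝ) / ((N:ℝ) - a * p) + (1 + a / 2) ^ p with hUp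
  have hU1pos : 0 < U1 := by
    have : (0:ℝ) < (N:ℝ) - a := by linarith
    have hN0 : (0:ℝ) < N := by positivity
    positivity
  have hmain : ∀ δ ∈ Set.Ioo (0:ℝ) 1,
      U1 ^ (-μ) ≤ phiRatio N a p μ δ ∧ phiRatio N a p μ δ ≤ Up := by
    intro δ hδ
    obtain ⟨hδ0, hδ1⟩ := hδ
    obtain ⟨hNum1, hNumU⟩ := key ha hδ0 hδ1 N hN p hp.le hNap
    have h1 := key ha hδ0 hδ1 N hN 1 le_rfl (by linarith)
    simp only [Real.rpow_one, mul_one] at h1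
    obtain ⟨hDen1, hDenU⟩ := h1
    set Num := (N:ℝ) * ∫ r in (0:ℝ)..1, r ^ (N - 1) * phiSpike a δ r ^ p
    set Den := (N:ℝ) * ∫ r in (0:ℝ)..1, r ^ (N - 1) * phiSpike a δ r
    have hDenpos : 0 < Den ^ μ := Real.rpow_pos_of_pos (by linarith) μ
    have hratio : phiRatio N a p μ δ = Num / Den ^ μ := rfl
    constructor
    · rw [hratio, Real.rpow_neg hU1pos.le, inv_eq_one_div]
      exact div_le_div₀ (by linarith) hNum1 hDenpos
        (Real.rpow_le_rpow (by linarith) hDenU hμ.le)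
    · rw [hratio]
      calc Num / Den ^ μ ≤ Num :=
            div_le_self (by linarith) (Real.one_le_rpow hDen1 hμ.le)
        _ ≤ Up := hNumU
  have hbdd : BddAbove (phiRatio N a p μ '' Set.Ioo 0 1) := by
    refine ⟨Up, ?_⟩
    rintro x ⟨δ, hδ, rfl⟩
    exact (hmain δ hδ).2
  have hLpos : 0 < U1 ^ (-μ) := Real.rpow_pos_of_pos hU1pos _
  have hhalf : (1/2 : ℝ) ∈ Set.Ioo (0:ℝ) 1 := by norm_num
  refine ⟨hmain, hbdd, ?_, ?_⟩
  · calc (0:ℝ) < U1 ^ (-μ) := hLpos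
      _ ≤ phiRatio N a p μ (1/2) := (hmain _ hhalf).1
      _ ≤ sSup (phiRatio N a p μ '' Set.Ioo 0 1) :=
          le_csSup hbdd (Set.mem_image_of_mem _ hhalf)
  · calc (0:ℝ) < U1 ^ (-μ) := hLpos
      _ ≤ sInf (phiRatio N a p μ '' Set.Ioo 0 1) := by
          apply le_csInf ⟨_, Set.mem_image_of_mem _ hhalf⟩
          rintro b ⟨δ, hδ, rfl⟩
          exact (hmain δ hδ).1
end

section
/- Let N ≥ 1 be an integer, let ε ∈ (0, 1/2) be a real number with 1 + ε^N < 2·(1−ε)^N, and let f : [0,1] → ℝ be nonnegative and antitone (nonincreasing) on [0,1]. Then ∫_{1−ε}^1 r^{N−1}·f(r) dr ≤ ∫_ε^{1−ε} r^{N−1}·f(r) dr. -/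
theorem stmt_15 (N : ℕ) (hN : 1 ≤ N) (ε : ℝ) (hε : ε ∈ Set.Ioo (0:ℝ) (1/2))
    (hεN : 1 + ε ^ N < 2 * (1 - ε) ^ N)
    (f : ℝ → ℝ) (hnn : ∀ r ∈ Set.Icc (0:ℝ) 1, 0 ≤ f r)
    (hanti : AntitoneOn f (Set.Icc 0 1)) :
    (∫ r in (1 - ε)..1, r ^ (N - 1) * f r) ≤
      ∫ r in ε..(1 - ε), r ^ (N - 1) * f r := by
  obtain ⟨hε0, hε2⟩ := hε
  have h1 : ε ≤ 1 - ε := by linarith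
  have h2 : (1:ℝ) - ε ≤ 1 := by linarith
  have hmem : (1 - ε) ∈ Set.Icc (0:ℝ) 1 := ⟨by linarith, by linarith⟩
  set c := f (1 - ε) with hc
  have hc0 : 0 ≤ c := hnn _ hmem
  have hint1 : IntervalIntegrable f MeasureTheory.volume (1-ε) 1 := by
    apply AntitoneOn.intervalIntegrable
    apply hanti.mono
    rw [Set.uIcc_of_le h2]
    exact Set.Icc_subset_Icc (by linarith) le_rfl
  have hint2 : IntervalIntegrable f MeasureTheory.volume ε (1-ε) := by
    apply AntitoneOn.intervalIntegrable
    apply hanti.mono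
    rw [Set.uIcc_of_le h1]
    exact Set.Icc_subset_Icc (le_of_lt hε0) (by linarith)
  have hcont : ∀ a b : ℝ, ContinuousOn (fun r : ℝ => r ^ (N-1)) (Set.uIcc a b) :=
    fun a b => (continuous_pow _).continuousOn
  have hint1' : IntervalIntegrable (fun r => r ^ (N-1) * f r) MeasureTheory.volume (1-ε) 1 :=
    hint1.continuousOn_mul (hcont _ _)
  have hint2' : IntervalIntegrable (fun r => r ^ (N-1) * f r) MeasureTheory.volume ε (1-ε) :=
    hint2.continuousOn_mul (hcont _ _)
  have hintc : ∀ a b : ℝ, IntervalIntegrable (fun r : ℝ => r ^ (N-1) * c)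
      MeasureTheory.volume a b :=
    fun a b => (Continuous.intervalIntegrable (by continuity) _ _)
  have key1 : (∫ r in (1-ε)..1, r ^ (N-1) * f r) ≤ ∫ r in (1-ε)..1, r ^ (N-1) * c := by
    apply intervalIntegral.integral_mono_on h2 hint1' (hintc _ _)
    intro x hx
    have hx1 : x ∈ Set.Icc (0:ℝ) 1 := ⟨by linarith [hx.1], hx.2⟩
    have hfx : f x ≤ c := hanti hmem hx1 hx.1
    exact mul_le_mul_of_nonneg_left hfx (pow_nonneg (by linarith [hx.1]) _)
  have key2 : (∫ r in ε..(1-ε), r ^ (N-1) * c) ≤ ∫ r in ε..(1-ε), r ^ (N-1) * f r := by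
    apply intervalIntegral.integral_mono_on h1 (hintc _ _) hint2'
    intro x hx
    have hx1 : x ∈ Set.Icc (0:ℝ) 1 := ⟨by linarith [hx.1], by linarith [hx.2]⟩
    have hfx : c ≤ f x := hanti hx1 hmem hx.2
    exact mul_le_mul_of_nonneg_left hfx (pow_nonneg (by linarith [hx.1]) _)
  have hNnat : N - 1 + 1 = N := Nat.succ_pred_eq_of_pos hN
  have hpow : ∀ a b : ℝ, (∫ r in a..b, r ^ (N-1) * c) = (b ^ N - a ^ N) / N * c := by
    intro a b
    rw [intervalIntegral.integral_mul_const, integral_pow, hNnat]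
    have hcast : ((N-1:ℕ):ℝ) + 1 = (N:ℝ) := by exact_mod_cast congrArg (fun n : ℕ => (n:ℝ)) hNnat
    rw [hcast]
  have hNpos : (0:ℝ) < N := by exact_mod_cast hN
  have mid : ((1:ℝ) ^ N - (1-ε) ^ N) / N * c ≤ ((1-ε) ^ N - ε ^ N) / N * c := by
    have hAB : (1:ℝ) ^ N - (1-ε) ^ N ≤ (1-ε) ^ N - ε ^ N := by
      simp only [one_pow]; linarith
    gcongr
  calc (∫ r in (1-ε)..1, r ^ (N-1) * f r)
      ≤ ∫ r in (1-ε)..1, r ^ (N-1) * c := key1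
    _ = ((1:ℝ) ^ N - (1-ε) ^ N) / N * c := hpow _ _
    _ ≤ ((1-ε) ^ N - ε ^ N) / N * c := mid
    _ = ∫ r in ε..(1-ε), r ^ (N-1) * c := (hpow _ _).symm
    _ ≤ ∫ r in ε..(1-ε), r ^ (N-1) * f r := key2
end
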